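/- arXiv:2412.20041 — 2 statements merged into one kernel-verified Lean document; each statement's English description precedes it below -/
import Mathlib

section
/- (Vector Bernstein consequence) Let v₁,…,v_m be independent random vectors in ℝ^d with E v_i = 0, ‖v_i‖₂ ≤ B almost surely, and Σ_{i=1}^m E‖v_i‖₂² ≤ σ². Then for all 0 ≤ t ≤ σ²/B, P(‖Σ_{i=1}^m v_i‖₂ ≥ t) ≤ exp(−t²/(8σ²) + 1/4). -/
open Matrix Finset Real MeasureTheory

noncomputable def l2norm {n : ℕ} (v : Fin n → ℝ) : ℝ := Real.sqrt (∑ i, v i ^ 2)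

def IsKSparse {n : ℕ} (k : ℕ) (v : Fin n → ℝ) : Prop :=
  (Finset.univ.filter fun i => v i ≠ 0).card ≤ k

noncomputable def lamMax {n : ℕ} (k : ℕ) (X : Matrix (Fin n) (Fin n) ℝ) : ℝ :=
  sSup {r | ∃ v : Fin n → ℝ, v ≠ 0 ∧ IsKSparse k v ∧ r = l2norm (X.mulVec v) / l2norm v}

noncomputable def lamMin {n : ℕ} (k : ℕ) (X : Matrix (Fin n) (Fin n) ℝ) : ℝ :=
  sInf {r | ∃ v : Fin n → ℝ, v ≠ 0 ∧ IsKSparse k v ∧ r = l2norm (X.mulVec v) / l2norm v}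

noncomputable def spCond {n : ℕ} (k : ℕ) (X : Matrix (Fin n) (Fin n) ℝ) : ℝ :=
  lamMax k X / lamMin k X

noncomputable def opNorm {n : ℕ} (X : Matrix (Fin n) (Fin n) ℝ) : ℝ :=
  sSup {r | ∃ v : Fin n → ℝ, v ≠ 0 ∧ r = l2norm (X.mulVec v) / l2norm v}

noncomputable def norm1to2 {n : ℕ} (X : Matrix (Fin n) (Fin n) ℝ) : ℝ :=
  ⨆ j, l2norm (fun i => X i j)

def Jmat (n : ℕ) : Matrix (Fin n) (Fin n) ℝ := Matrix.of fun _ _ => 1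

/-!
Let `ψ x = √(‖x‖² + σ²)`, a smoothed norm with gradient `x / ψ x` and curvature at most `1 / σ`.
Adding an independent mean-zero step `V` with `‖V‖ ≤ B` to `S` multiplies `E exp (L ψ S)` by at
most `exp (c E‖V‖²)`: the first-order term has mean zero by independence, and the second-order
terms are controlled through `exp x ≤ 1 + x + 3x²/4` for `|x| ≤ 1`. Iterating over the summands
gives `E exp (L ψ (∑ vᵢ)) ≤ exp (Lσ + cσ²)`, and Chernoff's bound with `L = t / (4σ²)` handles
`t > 5σ`, where `t ≤ σ² / B` forces `B < σ / 5`. For `√2 σ < t ≤ 5σ` Chebyshev's inequality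
with `E‖∑ vᵢ‖² = ∑ E‖vᵢ‖² ≤ σ²` suffices, and for `t ≤ √2 σ` the bound exceeds `1`.
-/

open ProbabilityTheory
open scoped InnerProductSpace

lemma exp_le_one_add_add_sq_of_abs_le_one {x : ℝ} (hx : |x| ≤ 1) :
    exp x ≤ 1 + x + 3 / 4 * x ^ 2 := by
  have h := Real.exp_bound hx two_pos
  have hsum : ∑ i ∈ range 2, x ^ i / (i.factorial : ℝ) = 1 + x := by simp [sum_range_succ]
  norm_num [hsum, sq_abs] at h
  linarith [(abs_le.mp h).2]

noncomputable def smoothNorm {E : Type*} [NormedAddCommGroup E] (σ : ℝ) (x : E) : ℝ :=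
  √(‖x‖ ^ 2 + σ ^ 2)

/-- Growth rate of `E exp (L ψ S)` per unit of added variance: `L / (2σ)` comes from the curvature
of `ψ`, the second term from the quadratic term of `exp`, and `1 + B / (2σ)` bounds the increment
of `ψ` per unit length of a step of length at most `B`. -/
noncomputable def bernsteinCoeff (σ B L : ℝ) : ℝ :=
  L / (2 * σ) + 3 / 4 * L ^ 2 * (1 + B / (2 * σ)) ^ 2

section SmoothNorm

variable {E : Type*} [NormedAddCommGroup E] {σ : ℝ}

lemma smoothNorm_sq (σ : ℝ) (x : E) : smoothNorm σ x ^ 2 = ‖x‖ ^ 2 + σ ^ 2 :=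
  Real.sq_sqrt (by positivity)

lemma norm_le_smoothNorm (σ : ℝ) (x : E) : ‖x‖ ≤ smoothNorm σ x :=
  Real.le_sqrt_of_sq_le (by nlinarith)

lemma le_smoothNorm (σ : ℝ) (x : E) : σ ≤ smoothNorm σ x :=
  Real.le_sqrt_of_sq_le (by nlinarith [sq_nonneg ‖x‖])

lemma smoothNorm_pos (hσ : 0 < σ) (x : E) : 0 < smoothNorm σ x :=
  hσ.trans_le (le_smoothNorm σ x)

lemma smoothNorm_zero (hσ : 0 ≤ σ) : smoothNorm σ (0 : E) = σ := by
  simp [smoothNorm, Real.sqrt_sq hσ]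

lemma smoothNorm_le_norm_add (hσ : 0 ≤ σ) (x : E) : smoothNorm σ x ≤ ‖x‖ + σ :=
  Real.sqrt_le_iff.2 ⟨by positivity, by nlinarith [norm_nonneg x]⟩

@[fun_prop]
lemma continuous_smoothNorm (σ : ℝ) : Continuous (smoothNorm (E := E) σ) := by
  unfold smoothNorm; fun_prop

variable [InnerProductSpace ℝ E]

lemma smoothNorm_add_le (hσ : 0 < σ) (x y : E) :
    smoothNorm σ (x + y) ≤ smoothNorm σ x + (⟪x, y⟫_ℝ + ‖y‖ ^ 2 / 2) / smoothNorm σ x := by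
  set A := smoothNorm σ x
  set w := (⟪x, y⟫_ℝ + ‖y‖ ^ 2 / 2) / A
  have hA : 0 < A := smoothNorm_pos hσ x
  have hAw : A * w = ⟪x, y⟫_ℝ + ‖y‖ ^ 2 / 2 := mul_div_cancel₀ _ hA.ne'
  have hsq : smoothNorm σ (x + y) ^ 2 = A ^ 2 + 2 * A * w := by
    rw [smoothNorm_sq, smoothNorm_sq, norm_add_sq_real, mul_assoc, hAw]; ring
  have hw : 0 ≤ A + w := by nlinarith [sq_nonneg (smoothNorm σ (x + y))]
  exact (pow_le_pow_iff_left₀ (smoothNorm_pos hσ _).le hw two_ne_zero).1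
    (by rw [hsq]; nlinarith [sq_nonneg w])

lemma abs_smoothNorm_increment_le {B : ℝ} (hσ : 0 < σ) (x : E) {y : E} (hy : ‖y‖ ≤ B) :
    |(⟪x, y⟫_ℝ + ‖y‖ ^ 2 / 2) / smoothNorm σ x| ≤ (1 + B / (2 * σ)) * ‖y‖ := by
  set A := smoothNorm σ x
  have hσA : σ ≤ A := le_smoothNorm σ x
  have hA : 0 < A := hσ.trans_le hσA
  have hBA : B / 2 ≤ A * (B / (2 * σ)) := by
    have hB : 0 ≤ B := (norm_nonneg y).trans hy
    rw [mul_div_assoc', le_div_iff₀ (by positivity)]; nlinarith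
  rw [abs_div, abs_of_pos hA, div_le_iff₀ hA]
  calc |⟪x, y⟫_ℝ + ‖y‖ ^ 2 / 2| ≤ ‖x‖ * ‖y‖ + ‖y‖ ^ 2 / 2 :=
        (abs_add_le _ _).trans
          (add_le_add (abs_real_inner_le_norm x y) (abs_of_nonneg (by positivity)).le)
    _ ≤ A * ‖y‖ + A * (B / (2 * σ)) * ‖y‖ := by
        gcongr ?_ + ?_
        · exact mul_le_mul_of_nonneg_right (norm_le_smoothNorm σ x) (norm_nonneg y)
        · nlinarith [norm_nonneg y]
    _ = (1 + B / (2 * σ)) * ‖y‖ * A := by ring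

noncomputable def gradExpSmoothNorm (σ L : ℝ) (x : E) : E :=
  (L * exp (L * smoothNorm σ x) / smoothNorm σ x) • x

lemma continuous_gradExpSmoothNorm (hσ : 0 < σ) (L : ℝ) :
    Continuous (gradExpSmoothNorm (E := E) σ L) := by
  unfold gradExpSmoothNorm
  exact ((by fun_prop : Continuous fun x : E => L * exp (L * smoothNorm σ x)).div
    (continuous_smoothNorm σ) fun x => (smoothNorm_pos hσ x).ne').smul continuous_id

lemma norm_gradExpSmoothNorm_le (hσ : 0 < σ) {L : ℝ} (hL : 0 ≤ L) (x : E) :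
    ‖gradExpSmoothNorm σ L x‖ ≤ L * exp (L * smoothNorm σ x) := by
  have hψ := smoothNorm_pos hσ x
  rw [gradExpSmoothNorm, norm_smul, Real.norm_eq_abs, abs_of_nonneg (by positivity),
    div_mul_eq_mul_div, div_le_iff₀ hψ]
  gcongr
  exact norm_le_smoothNorm σ x

lemma exp_smoothNorm_add_le {B L : ℝ} (hσ : 0 < σ) (hL : 0 ≤ L)
    (hLB : L * (B * (1 + B / (2 * σ))) ≤ 1) (x : E) {y : E} (hy : ‖y‖ ≤ B) :
    exp (L * smoothNorm σ (x + y)) ≤ exp (L * smoothNorm σ x) + ⟪gradExpSmoothNorm σ L x, y⟫_ℝ +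
      bernsteinCoeff σ B L * (exp (L * smoothNorm σ x) * ‖y‖ ^ 2) := by
  set A := smoothNorm σ x with hA_def
  set w := (⟪x, y⟫_ℝ + ‖y‖ ^ 2 / 2) / A
  set K := 1 + B / (2 * σ)
  have hA : 0 < A := smoothNorm_pos hσ x
  have hw : |w| ≤ K * ‖y‖ := abs_smoothNorm_increment_le hσ x hy
  have hK : 0 ≤ K := by have := (norm_nonneg y).trans hy; positivity
  have hLw : |L * w| ≤ 1 := by
    rw [abs_mul, abs_of_nonneg hL]
    calc L * |w| ≤ L * (K * B) := by gcongr; exact hw.trans (by gcongr)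
      _ ≤ 1 := by linarith
  have hlin : L * w ≤ L * ⟪x, y⟫_ℝ / A + L / (2 * σ) * ‖y‖ ^ 2 := by
    have : ‖y‖ ^ 2 / 2 / A ≤ ‖y‖ ^ 2 / (2 * σ) := by
      rw [div_div]; gcongr; exact le_smoothNorm σ x
    calc L * w = L * ⟪x, y⟫_ℝ / A + L * (‖y‖ ^ 2 / 2 / A) := by ring
      _ ≤ L * ⟪x, y⟫_ℝ / A + L * (‖y‖ ^ 2 / (2 * σ)) := by gcongr
      _ = _ := by ring
  have hquad : (L * w) ^ 2 ≤ L ^ 2 * K ^ 2 * ‖y‖ ^ 2 := by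
    rw [mul_pow, ← sq_abs w]
    have := pow_le_pow_left₀ (abs_nonneg w) hw 2
    rw [mul_pow] at this
    nlinarith [sq_nonneg L]
  calc exp (L * smoothNorm σ (x + y)) ≤ exp (L * (A + w)) := by
        gcongr; exact smoothNorm_add_le hσ x y
    _ = exp (L * A) * exp (L * w) := by rw [mul_add, exp_add]
    _ ≤ exp (L * A) * (1 + L * ⟪x, y⟫_ℝ / A + bernsteinCoeff σ B L * ‖y‖ ^ 2) := by
        gcongr
        refine (exp_le_one_add_add_sq_of_abs_le_one hLw).trans ?_
        unfold bernsteinCoeff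
        nlinarith
    _ = _ := by rw [gradExpSmoothNorm, real_inner_smul_left, ← hA_def]; field_simp

end SmoothNorm

lemma ProbabilityTheory.IndepFun.integral_inner_eq_inner_integral {Ω E : Type*}
    [MeasurableSpace Ω] {μ : Measure Ω} [NormedAddCommGroup E] [InnerProductSpace ℝ E]
    [CompleteSpace E] [MeasurableSpace E] [BorelSpace E] {X Y : Ω → E} (hXY : X ⟂ᵢ[μ] Y)
    (hX : Integrable X μ) (hY : Integrable Y μ) :
    ∫ ω, ⟪X ω, Y ω⟫_ℝ ∂μ = ⟪∫ ω, X ω ∂μ, ∫ ω, Y ω ∂μ⟫_ℝ :=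
  hXY.integral_bilin hX hY (innerSL ℝ)

section Probability

variable {Ω E ι : Type*} [MeasurableSpace Ω] {μ : Measure Ω} [NormedAddCommGroup E]
  {v : ι → Ω → E} {σ B L : ℝ}

lemma integrable_exp_mul_smoothNorm [IsFiniteMeasure μ] {X : Ω → E} {C : ℝ} (hσ : 0 ≤ σ)
    (hL : 0 ≤ L) (hX : AEStronglyMeasurable X μ) (hXC : ∀ᵐ ω ∂μ, ‖X ω‖ ≤ C) :
    Integrable (fun ω => exp (L * smoothNorm σ (X ω))) μ := by
  refine .of_bound ((by fun_prop : Continuous fun x : E => exp (L * smoothNorm σ x))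
    |>.comp_aestronglyMeasurable hX) (exp (L * (C + σ))) ?_
  filter_upwards [hXC] with ω hω
  rw [Real.norm_eq_abs, abs_exp]
  gcongr
  exact (smoothNorm_le_norm_add hσ _).trans (by linarith)

lemma ae_norm_sum_le (hbound : ∀ i, ∀ᵐ ω ∂μ, ‖v i ω‖ ≤ B) (s : Finset ι) :
    ∀ᵐ ω ∂μ, ‖∑ i ∈ s, v i ω‖ ≤ #s * B := by
  filter_upwards [s.eventually_all.2 fun i _ => hbound i] with ω hω
  exact (norm_sum_le _ _).trans (by simpa using Finset.sum_le_card_nsmul s _ B hω)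

lemma measureReal_le_norm_le_integral_sq_div [IsFiniteMeasure μ] {X : Ω → E} (hX : MemLp X 2 μ)
    {t : ℝ} (ht : 0 < t) : μ.real {ω | t ≤ ‖X ω‖} ≤ (∫ ω, ‖X ω‖ ^ 2 ∂μ) / t ^ 2 := by
  have hsub : {ω | t ≤ ‖X ω‖} ⊆ {ω | t ^ 2 ≤ ‖X ω‖ ^ 2} := fun ω hω =>
    pow_le_pow_left₀ ht.le hω 2
  rw [le_div_iff₀ (by positivity), mul_comm]
  calc t ^ 2 * μ.real {ω | t ≤ ‖X ω‖} ≤ t ^ 2 * μ.real {ω | t ^ 2 ≤ ‖X ω‖ ^ 2} := by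
        gcongr t ^ 2 * ?_
        exact measureReal_mono hsub
    _ ≤ ∫ ω, ‖X ω‖ ^ 2 ∂μ :=
        mul_meas_ge_le_integral_of_nonneg (ae_of_all _ fun _ => by positivity)
          (hX.integrable_norm_pow two_ne_zero) _

variable [InnerProductSpace ℝ E] [CompleteSpace E] [MeasurableSpace E] [BorelSpace E]

lemma integral_norm_add_sq_of_indepFun [IsFiniteMeasure μ] {X Y : Ω → E} (hXY : X ⟂ᵢ[μ] Y)
    (hX : MemLp X 2 μ) (hY : MemLp Y 2 μ) (hY0 : ∫ ω, Y ω ∂μ = 0) :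
    ∫ ω, ‖X ω + Y ω‖ ^ 2 ∂μ = ∫ ω, ‖X ω‖ ^ 2 ∂μ + ∫ ω, ‖Y ω‖ ^ 2 ∂μ := by
  have hX1 := hX.integrable one_le_two
  have hY1 := hY.integrable one_le_two
  have hXY1 : Integrable (fun ω => ⟪X ω, Y ω⟫_ℝ) μ := hXY.integrable_bilin hX1 hY1 (innerSL ℝ)
  have hX2 := hX.integrable_norm_pow two_ne_zero
  have hY2 := hY.integrable_norm_pow two_ne_zero
  have hX2XY : Integrable (fun ω => ‖X ω‖ ^ 2 + 2 * ⟪X ω, Y ω⟫_ℝ) μ := hX2.add (hXY1.const_mul 2)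
  simp_rw [norm_add_sq_real]
  rw [integral_add hX2XY hY2, integral_add hX2 (hXY1.const_mul 2),
    integral_const_mul, hXY.integral_inner_eq_inner_integral hX1 hY1, hY0, inner_zero_right]
  ring

variable [SecondCountableTopology E]

lemma integral_exp_smoothNorm_add_le [IsFiniteMeasure μ] {S V : Ω → E} {C : ℝ}
    (hσ : 0 < σ) (hL : 0 ≤ L) (hLB : L * (B * (1 + B / (2 * σ))) ≤ 1)
    (hS : Measurable S) (hV : Measurable V) (hSV : S ⟂ᵢ[μ] V)
    (hSC : ∀ᵐ ω ∂μ, ‖S ω‖ ≤ C) (hVB : ∀ᵐ ω ∂μ, ‖V ω‖ ≤ B) (hV0 : ∫ ω, V ω ∂μ = 0) :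
    ∫ ω, exp (L * smoothNorm σ (S ω + V ω)) ∂μ ≤
      (∫ ω, exp (L * smoothNorm σ (S ω)) ∂μ) *
        exp (bernsteinCoeff σ B L * ∫ ω, ‖V ω‖ ^ 2 ∂μ) := by
  set F : E → ℝ := fun x => exp (L * smoothNorm σ x)
  set G : E → E := gradExpSmoothNorm σ L
  set c := bernsteinCoeff σ B L
  have hFc : Continuous F := by fun_prop
  have hGc : Continuous G := continuous_gradExpSmoothNorm hσ L
  have hFS : Integrable (fun ω => F (S ω)) μ :=
    integrable_exp_mul_smoothNorm hσ.le hL hS.aestronglyMeasurable hSC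
  have hGS : Integrable (fun ω => G (S ω)) μ :=
    (hFS.const_mul L).mono' (hGc.comp_aestronglyMeasurable hS.aestronglyMeasurable)
      (ae_of_all _ fun ω => norm_gradExpSmoothNorm_le hσ hL (S ω))
  have hVL2 : MemLp V 2 μ := .of_bound hV.aestronglyMeasurable B hVB
  have hVint : Integrable V μ := hVL2.integrable one_le_two
  have hV2 : Integrable (fun ω => ‖V ω‖ ^ 2) μ := hVL2.integrable_norm_pow two_ne_zero
  have hGSV : (fun ω => G (S ω)) ⟂ᵢ[μ] V := hSV.comp hGc.measurable measurable_id
  have hFSV : (fun ω => F (S ω)) ⟂ᵢ[μ] (fun ω => ‖V ω‖ ^ 2) :=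
    hSV.comp hFc.measurable (measurable_norm.pow_const 2)
  have hinner : Integrable (fun ω => ⟪G (S ω), V ω⟫_ℝ) μ :=
    hGSV.integrable_bilin hGS hVint (innerSL ℝ)
  have hcross : ∫ ω, ⟪G (S ω), V ω⟫_ℝ ∂μ = 0 := by
    rw [hGSV.integral_inner_eq_inner_integral hGS hVint, hV0, inner_zero_right]
  have hprod : ∫ ω, F (S ω) * ‖V ω‖ ^ 2 ∂μ = (∫ ω, F (S ω) ∂μ) * ∫ ω, ‖V ω‖ ^ 2 ∂μ :=
    hFSV.integral_fun_mul_eq_mul_integral hFS.1 hV2.1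
  have hFV : Integrable (fun ω => F (S ω) * ‖V ω‖ ^ 2) μ := hFSV.integrable_mul hFS hV2
  have hFG : Integrable (fun ω => F (S ω) + ⟪G (S ω), V ω⟫_ℝ) μ := hFS.add hinner
  have hlhs : Integrable (fun ω => F (S ω + V ω)) μ := by
    refine integrable_exp_mul_smoothNorm (C := C + B) hσ.le hL (hS.add hV).aestronglyMeasurable ?_
    filter_upwards [hSC, hVB] with ω h₁ h₂
    exact (norm_add_le _ _).trans (add_le_add h₁ h₂)
  calc ∫ ω, F (S ω + V ω) ∂μ
      ≤ ∫ ω, F (S ω) + ⟪G (S ω), V ω⟫_ℝ + c * (F (S ω) * ‖V ω‖ ^ 2) ∂μ := by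
        refine integral_mono_ae hlhs (hFG.add (hFV.const_mul c)) ?_
        filter_upwards [hVB] with ω hω
        exact exp_smoothNorm_add_le hσ hL hLB (S ω) hω
    _ = (∫ ω, F (S ω) ∂μ) * (1 + c * ∫ ω, ‖V ω‖ ^ 2 ∂μ) := by
        rw [integral_add hFG (hFV.const_mul c), integral_add hFS hinner,
          integral_const_mul, hcross, hprod]
        ring
    _ ≤ (∫ ω, F (S ω) ∂μ) * exp (c * ∫ ω, ‖V ω‖ ^ 2 ∂μ) := by
        gcongr
        linarith [add_one_le_exp (c * ∫ ω, ‖V ω‖ ^ 2 ∂μ)]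

lemma integral_norm_sum_sq_of_iIndepFun [IsFiniteMeasure μ] (hmeas : ∀ i, Measurable (v i))
    (hindep : iIndepFun v μ) (hL2 : ∀ i, MemLp (v i) 2 μ) (hmean : ∀ i, ∫ ω, v i ω ∂μ = 0)
    (s : Finset ι) :
    ∫ ω, ‖∑ i ∈ s, v i ω‖ ^ 2 ∂μ = ∑ i ∈ s, ∫ ω, ‖v i ω‖ ^ 2 ∂μ := by
  classical
  induction s using Finset.induction_on with
  | empty => simp
  | insert j s hj ih =>
    have hind : (fun ω => ∑ i ∈ s, v i ω) ⟂ᵢ[μ] v j := by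
      simpa [Finset.sum_fn] using hindep.indepFun_finsetSum_of_notMem hmeas hj
    simp_rw [Finset.sum_insert hj, add_comm (v j _)]
    rw [integral_norm_add_sq_of_indepFun hind (memLp_finsetSum s fun i _ => hL2 i) (hL2 j)
      (hmean j), ih, add_comm]

lemma integral_exp_smoothNorm_sum_le [IsProbabilityMeasure μ] (hσ : 0 < σ) (hL : 0 ≤ L)
    (hLB : L * (B * (1 + B / (2 * σ))) ≤ 1) (hmeas : ∀ i, Measurable (v i))
    (hindep : iIndepFun v μ) (hmean : ∀ i, ∫ ω, v i ω ∂μ = 0)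
    (hbound : ∀ i, ∀ᵐ ω ∂μ, ‖v i ω‖ ≤ B) (s : Finset ι) :
    ∫ ω, exp (L * smoothNorm σ (∑ i ∈ s, v i ω)) ∂μ ≤
      exp (L * σ + bernsteinCoeff σ B L * ∑ i ∈ s, ∫ ω, ‖v i ω‖ ^ 2 ∂μ) := by
  classical
  induction s using Finset.induction_on with
  | empty => simp [smoothNorm_zero hσ.le]
  | insert j s hj ih =>
    have hind : (fun ω => ∑ i ∈ s, v i ω) ⟂ᵢ[μ] v j := by
      simpa [Finset.sum_fn] using hindep.indepFun_finsetSum_of_notMem hmeas hj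
    simp_rw [Finset.sum_insert hj, add_comm (v j _)]
    calc ∫ ω, exp (L * smoothNorm σ (∑ i ∈ s, v i ω + v j ω)) ∂μ
        ≤ (∫ ω, exp (L * smoothNorm σ (∑ i ∈ s, v i ω)) ∂μ) *
            exp (bernsteinCoeff σ B L * ∫ ω, ‖v j ω‖ ^ 2 ∂μ) :=
          integral_exp_smoothNorm_add_le hσ hL hLB (Finset.measurable_sum s fun i _ => hmeas i)
            (hmeas j) hind (ae_norm_sum_le hbound s) (hbound j) (hmean j)
      _ ≤ exp (L * σ + bernsteinCoeff σ B L * ∑ i ∈ s, ∫ ω, ‖v i ω‖ ^ 2 ∂μ) *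
            exp (bernsteinCoeff σ B L * ∫ ω, ‖v j ω‖ ^ 2 ∂μ) := by gcongr
      _ = _ := by rw [← exp_add]; ring_nf

lemma measureReal_le_norm_sum_le_exp [IsProbabilityMeasure μ] (hσ : 0 < σ) (hL : 0 ≤ L)
    (hLB : L * (B * (1 + B / (2 * σ))) ≤ 1) (hmeas : ∀ i, Measurable (v i))
    (hindep : iIndepFun v μ) (hmean : ∀ i, ∫ ω, v i ω ∂μ = 0)
    (hbound : ∀ i, ∀ᵐ ω ∂μ, ‖v i ω‖ ≤ B) (s : Finset ι) (t : ℝ) :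
    μ.real {ω | t ≤ ‖∑ i ∈ s, v i ω‖} ≤
      exp (-L * t + L * σ + bernsteinCoeff σ B L * ∑ i ∈ s, ∫ ω, ‖v i ω‖ ^ 2 ∂μ) := by
  set X := fun ω => smoothNorm σ (∑ i ∈ s, v i ω)
  have hint : Integrable (fun ω => exp (L * X ω)) μ :=
    integrable_exp_mul_smoothNorm hσ.le hL
      (Finset.measurable_sum s fun i _ => hmeas i).aestronglyMeasurable (ae_norm_sum_le hbound s)
  calc μ.real {ω | t ≤ ‖∑ i ∈ s, v i ω‖} ≤ μ.real {ω | t ≤ X ω} :=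
        measureReal_mono fun ω hω => le_trans hω (norm_le_smoothNorm σ _)
    _ ≤ exp (-L * t) * mgf X μ L := measure_ge_le_exp_mul_mgf t hL hint
    _ ≤ exp (-L * t) *
          exp (L * σ + bernsteinCoeff σ B L * ∑ i ∈ s, ∫ ω, ‖v i ω‖ ^ 2 ∂μ) := by
        gcongr
        exact integral_exp_smoothNorm_sum_le hσ hL hLB hmeas hindep hmean hbound s
    _ = _ := by rw [← exp_add, add_assoc]

end Probability

lemma exp_div_eight_sub_le_self {x : ℝ} (h2 : 2 ≤ x) (h25 : x ≤ 25) :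
    exp (x / 8 - 1 / 4) ≤ x := by
  have hconv := convexOn_exp.2 (Set.mem_univ 0) (Set.mem_univ (23 / 8))
    (by linarith : 0 ≤ (25 - x) / 23) (by linarith : 0 ≤ (x - 2) / 23) (by ring)
  have he : exp (23 / 8) ≤ 25 := by
    calc exp (23 / 8) ≤ exp 1 ^ 3 := by rw [← exp_nat_mul]; gcongr; norm_num
      _ ≤ 2.7182818286 ^ 3 := by gcongr; exact exp_one_lt_d9.le
      _ ≤ 25 := by norm_num
  simp only [smul_eq_mul, mul_zero, zero_add, exp_zero, mul_one] at hconv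
  calc exp (x / 8 - 1 / 4) = exp ((x - 2) / 23 * (23 / 8)) := by ring_nf
    _ ≤ (25 - x) / 23 + (x - 2) / 23 * exp (23 / 8) := hconv
    _ ≤ x := by nlinarith

lemma sq_div_sq_le_exp {σ t : ℝ} (hσ : 0 < σ) (ht : 0 ≤ t) (ht2 : 2 * σ ^ 2 ≤ t ^ 2)
    (ht5 : t ≤ 5 * σ) : σ ^ 2 / t ^ 2 ≤ exp (-t ^ 2 / (8 * σ ^ 2) + 1 / 4) := by
  set x := t ^ 2 / σ ^ 2
  have hσ2 : 0 < σ ^ 2 := by positivity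
  have h2 : 2 ≤ x := by rw [le_div_iff₀ hσ2]; linarith
  have h25 : x ≤ 25 := by rw [div_le_iff₀ hσ2]; nlinarith
  have hx : -t ^ 2 / (8 * σ ^ 2) + 1 / 4 = -(x / 8 - 1 / 4) := by ring
  rw [hx, exp_neg, ← inv_div]
  exact inv_anti₀ (exp_pos _) (exp_div_eight_sub_le_self h2 h25)

lemma bernstein_rate_admissible {σ B t : ℝ} (hσ : 0 < σ) (hB : 0 < B) (ht : 5 * σ < t)
    (htB : t * B ≤ σ ^ 2) : t / (4 * σ ^ 2) * (B * (1 + B / (2 * σ))) ≤ 1 := by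
  have hβ : B / (2 * σ) ≤ 1 / 10 := by rw [div_le_iff₀ (by positivity)]; nlinarith
  have hLB : t / (4 * σ ^ 2) * B ≤ 1 / 4 := by
    rw [div_mul_eq_mul_div, div_le_iff₀ (by positivity)]; linarith
  calc t / (4 * σ ^ 2) * (B * (1 + B / (2 * σ)))
      = t / (4 * σ ^ 2) * B * (1 + B / (2 * σ)) := by ring
    _ ≤ 1 / 4 * (1 + 1 / 10) := by gcongr
    _ ≤ 1 := by norm_num

lemma bernstein_exponent_le {σ B t V : ℝ} (hσ : 0 < σ) (hB : 0 < B) (ht : 5 * σ < t)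
    (htB : t * B ≤ σ ^ 2) (hV : V ≤ σ ^ 2) :
    -(t / (4 * σ ^ 2)) * t + t / (4 * σ ^ 2) * σ + bernsteinCoeff σ B (t / (4 * σ ^ 2)) * V ≤
      -t ^ 2 / (8 * σ ^ 2) + 1 / 4 := by
  have ht0 : 0 < t := by linarith
  set u := t / σ with hu_def
  set β := B / (2 * σ) with hβ_def
  have hu : 5 ≤ u := by rw [le_div_iff₀ hσ]; linarith
  have hβ : β ≤ 1 / 10 := by rw [div_le_iff₀ (by positivity)]; nlinarith
  have hcoeff :
      bernsteinCoeff σ B (t / (4 * σ ^ 2)) * σ ^ 2 = u / 8 + 3 / 64 * u ^ 2 * (1 + β) ^ 2 := by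
    rw [bernsteinCoeff, hu_def, hβ_def]; field_simp; ring
  have hlin : -(t / (4 * σ ^ 2)) * t + t / (4 * σ ^ 2) * σ = -u ^ 2 / 4 + u / 4 := by
    rw [hu_def]; field_simp
  have hrhs : -t ^ 2 / (8 * σ ^ 2) = -u ^ 2 / 8 := by rw [hu_def]; field_simp
  have hc : 0 ≤ bernsteinCoeff σ B (t / (4 * σ ^ 2)) := by unfold bernsteinCoeff; positivity
  have hβ2 : (1 + β) ^ 2 ≤ (11 / 10) ^ 2 := by gcongr; linarith
  rw [hlin, hrhs]
  nlinarith [mul_le_mul_of_nonneg_left hV hc]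

theorem stmt10 (m d : ℕ) (B σ : ℝ) (hB : 0 < B) (hσ : 0 < σ)
    {Ω : Type*} [MeasurableSpace Ω] (μ : Measure Ω) [IsProbabilityMeasure μ]
    (v : Fin m → Ω → EuclideanSpace ℝ (Fin d))
    (hmeas : ∀ i, Measurable (v i))
    (hindep : ProbabilityTheory.iIndepFun v μ)
    (hmean : ∀ i, ∫ ω, v i ω ∂μ = 0)
    (hbound : ∀ i, ∀ᵐ ω ∂μ, ‖v i ω‖ ≤ B)
    (hvar : ∑ i, ∫ ω, ‖v i ω‖ ^ 2 ∂μ ≤ σ ^ 2) :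
    ∀ t : ℝ, 0 ≤ t → t ≤ σ ^ 2 / B →
      (μ {ω | t ≤ ‖∑ i, v i ω‖}).toReal ≤
        Real.exp (-(t ^ 2) / (8 * σ ^ 2) + 1 / 4) := by
  intro t ht htB
  rw [← measureReal_def]
  rcases le_or_gt (t ^ 2) (2 * σ ^ 2) with hsmall | hsmall
  · refine measureReal_le_one.trans (one_le_exp ?_)
    have : t ^ 2 / (8 * σ ^ 2) ≤ 1 / 4 := by rw [div_le_iff₀ (by positivity)]; linarith
    rw [neg_div]; linarith
  have ht0 : 0 < t := by nlinarith
  rcases le_or_gt t (5 * σ) with hmid | hmid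
  · have hL2 (i : Fin m) : MemLp (v i) 2 μ := .of_bound (hmeas i).aestronglyMeasurable B (hbound i)
    calc μ.real {ω | t ≤ ‖∑ i, v i ω‖} ≤ (∫ ω, ‖∑ i, v i ω‖ ^ 2 ∂μ) / t ^ 2 :=
          measureReal_le_norm_le_integral_sq_div (X := fun ω => ∑ i, v i ω)
            (memLp_finsetSum _ fun i _ => hL2 i) ht0
      _ = (∑ i, ∫ ω, ‖v i ω‖ ^ 2 ∂μ) / t ^ 2 := by
          rw [integral_norm_sum_sq_of_iIndepFun hmeas hindep hL2 hmean]
      _ ≤ σ ^ 2 / t ^ 2 := by gcongr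
      _ ≤ _ := sq_div_sq_le_exp hσ ht hsmall.le hmid
  have htB' : t * B ≤ σ ^ 2 := (le_div_iff₀ hB).1 htB
  exact (measureReal_le_norm_sum_le_exp hσ (by positivity)
    (bernstein_rate_admissible hσ hB hmid htB') hmeas hindep hmean hbound univ t).trans
    (exp_le_exp.2 (bernstein_exponent_le hσ hB hmid htB' hvar))
end

section
/- (ℓ₁-cone argument) Let α be supported on K, β ∈ ℝ^n, and γ ∈ ℝ^n satisfy ⟨γ, β⟩ = 0, ‖D_K(γ − sgn(α))‖₂ ≤ ε, ‖D_{K^c}γ‖_∞ ≤ 1/2. Then ‖α + β‖₁ ≥ ‖α‖₁ − ε‖D_K β‖₂ + (1/2)‖D_{K^c}β‖₁. -/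
open Matrix Finset Real MeasureTheory

theorem stmt18 (n : ℕ) (K : Finset (Fin n)) (α β γ : Fin n → ℝ) (ε : ℝ)
    (hα : ∀ i ∉ K, α i = 0)
    (horth : ∑ i, γ i * β i = 0)
    (hγ1 : l2norm (fun i => if i ∈ K then γ i - Real.sign (α i) else 0) ≤ ε)
    (hγ2 : ∀ i ∉ K, |γ i| ≤ 1 / 2) :
    ∑ i, |α i| - ε * l2norm (fun i => if i ∈ K then β i else 0) +
      (1 / 2) * ∑ i ∈ Kᶜ, |β i| ≤ ∑ i, |α i + β i| := by
  classical
  have hsplit : ∀ f : Fin n → ℝ, ∑ i, f i = ∑ i ∈ K, f i + ∑ i ∈ Kᶜ, f i := by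
    intro f; rw [Finset.sum_add_sum_compl]
  have hite : ∀ f : Fin n → ℝ, (∑ i, (if i ∈ K then f i else 0) ^ 2) = ∑ i ∈ K, f i ^ 2 := by
    intro f
    rw [show (∑ i, (if i ∈ K then f i else 0) ^ 2) = ∑ i, (if i ∈ K then f i ^ 2 else 0) by
      apply Finset.sum_congr rfl; intro i _; split <;> simp]
    rw [Finset.sum_ite_mem, Finset.univ_inter]
  -- values of the two l2norms
  have hMval : l2norm (fun i => if i ∈ K then β i else 0) = Real.sqrt (∑ i ∈ K, β i ^ 2) := by
    unfold l2norm; rw [hite]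
  have hLval : l2norm (fun i => if i ∈ K then γ i - Real.sign (α i) else 0)
      = Real.sqrt (∑ i ∈ K, (γ i - Real.sign (α i)) ^ 2) := by
    unfold l2norm; rw [hite]
  set M := Real.sqrt (∑ i ∈ K, β i ^ 2) with hMdef
  have hM0 : 0 ≤ M := Real.sqrt_nonneg _
  -- Cauchy-Schwarz : |s1| ≤ ε * M
  have hCS : |∑ i ∈ K, (γ i - Real.sign (α i)) * β i| ≤ ε * M := by
    have h1 := Finset.sum_mul_sq_le_sq_mul_sq K (fun i => γ i - Real.sign (α i)) β
    have h2 : |∑ i ∈ K, (γ i - Real.sign (α i)) * β i|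
        ≤ Real.sqrt (∑ i ∈ K, (γ i - Real.sign (α i)) ^ 2) * M := by
      rw [← Real.sqrt_mul_self (abs_nonneg _), ← Real.sqrt_mul (by positivity)]
      apply Real.sqrt_le_sqrt
      rw [abs_mul_abs_self, ← sq]; exact h1
    have hε : Real.sqrt (∑ i ∈ K, (γ i - Real.sign (α i)) ^ 2) ≤ ε := by
      rw [← hLval]; exact hγ1
    calc |∑ i ∈ K, (γ i - Real.sign (α i)) * β i| ≤ _ := h2
      _ ≤ ε * M := by nlinarith [Real.sqrt_nonneg (∑ i ∈ K, (γ i - Real.sign (α i)) ^ 2)]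
  -- bound on s2
  have hs2 : |∑ i ∈ Kᶜ, γ i * β i| ≤ (1/2) * ∑ i ∈ Kᶜ, |β i| := by
    calc |∑ i ∈ Kᶜ, γ i * β i| ≤ ∑ i ∈ Kᶜ, |γ i * β i| := Finset.abs_sum_le_sum_abs _ _
      _ ≤ ∑ i ∈ Kᶜ, (1/2) * |β i| := by
          apply Finset.sum_le_sum; intro i hi
          rw [abs_mul]
          exact mul_le_mul_of_nonneg_right (hγ2 i (Finset.mem_compl.mp hi)) (abs_nonneg _)
      _ = (1/2) * ∑ i ∈ Kᶜ, |β i| := by rw [Finset.mul_sum]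
  -- orthogonality
  have horth' : ∑ i ∈ K, γ i * β i = - ∑ i ∈ Kᶜ, γ i * β i := by
    have := hsplit (fun i => γ i * β i)
    rw [horth] at this; linarith
  -- pointwise bound
  have hpt : ∀ i ∈ K, |α i| + Real.sign (α i) * β i ≤ |α i + β i| := by
    intro i _
    rcases lt_trichotomy (α i) 0 with h | h | h
    · rw [Real.sign_of_neg h, abs_of_neg h]
      have := neg_abs_le (α i + β i); linarith
    · simp [h, Real.sign_zero]
    · rw [Real.sign_of_pos h, abs_of_pos h]
      have := le_abs_self (α i + β i); linarith
  -- combine sums over K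
  have hK : ∑ i ∈ K, |α i| + ∑ i ∈ K, Real.sign (α i) * β i ≤ ∑ i ∈ K, |α i + β i| := by
    rw [← Finset.sum_add_distrib]; exact Finset.sum_le_sum hpt
  have hαfull : ∑ i, |α i| = ∑ i ∈ K, |α i| := by
    rw [hsplit (fun i => |α i|)]
    have : ∑ i ∈ Kᶜ, |α i| = 0 := by
      apply Finset.sum_eq_zero; intro i hi
      rw [hα i (Finset.mem_compl.mp hi), abs_zero]
    linarith
  have hsgn : ∑ i ∈ K, Real.sign (α i) * β i
      = - ∑ i ∈ Kᶜ, γ i * β i - ∑ i ∈ K, (γ i - Real.sign (α i)) * β i := by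
    rw [← horth']
    rw [show ∑ i ∈ K, (γ i - Real.sign (α i)) * β i
      = ∑ i ∈ K, γ i * β i - ∑ i ∈ K, Real.sign (α i) * β i by
        rw [← Finset.sum_sub_distrib]; apply Finset.sum_congr rfl; intro i _; ring]
    ring
  have hβc : ∑ i ∈ Kᶜ, |α i + β i| = ∑ i ∈ Kᶜ, |β i| := by
    apply Finset.sum_congr rfl; intro i hi
    rw [hα i (Finset.mem_compl.mp hi), zero_add]
  rw [hsplit (fun i => |α i + β i|), hβc, hMval, hαfull]
  have h1 := abs_le.mp hCS
  have h2 := abs_le.mp hs2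
  linarith [hK, hsgn]
end
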